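/- arXiv:2511.06553 — 5 statements merged into one kernel-verified Lean document; each statement's English description precedes it below -/
import Mathlib

section
/- Let p > 1 and let f be a probability density on ℝ with finite second moment Θ₀ = ∫_ℝ x² f dx > 0 and ∫_ℝ f^p dx < ∞, and let B be the Barenblatt profile of unit mass and second moment Θ₀. Then the Newman–Ralston relative entropy is bounded by the relative Rényi entropy as follows: H_p(f|B) ≤ (∫_ℝ f^p dx) · ( R_p(B) − R_p(f) ), where H_p(f|B) = (1/(p−1)) ∫_ℝ ( f^p − B^p − p B^{p−1}(f − B) ) dx. -/
/-! With `F = ∫ f^p`, `G = ∫ B^p` and `D = ∫ B^(p-1) f`, expanding the integrand gives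
`(p - 1) H_p(f|B) = F - G - p (D - G)`. Since `B^(p-1) = (C - k y²)_+ ≥ C - k y²` and `f`, `B`
share mass and second moment, `D ≥ ∫ (C - k y²) f = ∫ (C - k y²) B = G`. Hence
`(p - 1) H_p(f|B) ≤ F - G ≤ F log (F / G)` by `1 - 1/t ≤ log t`, and the right-hand side is
`(p - 1) F (R_p(B) - R_p(f))`. -/

open MeasureTheory Filter Set

/-- The `p`-logarithm: `ln_p u = (u^(p-1) - 1)/(p-1)` for `p ≠ 1`, and `ln u` for `p = 1`. -/
noncomputable def lnp (p : ℝ) (u : ℝ) : ℝ :=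
  if p = 1 then Real.log u else (u ^ (p - 1) - 1) / (p - 1)

/-- Generalized Fisher information `I_p(f) = (1/2) ∫ f ((ln_p f)')²`. -/
noncomputable def fisherP (p : ℝ) (f : ℝ → ℝ) : ℝ :=
  (1 / 2) * ∫ x : ℝ, f x * (deriv (fun y => lnp p (f y)) x) ^ 2

/-- Rényi entropy of order `p ≠ 1`: `R_p(f) = (1/(1-p)) ln ∫ f^p`. -/
noncomputable def renyi (p : ℝ) (f : ℝ → ℝ) : ℝ :=
  (1 / (1 - p)) * Real.log (∫ x : ℝ, f x ^ p)

/-- `f`, together with all its derivatives, decays faster than any polynomial at infinity. -/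
def RapidDecay (f : ℝ → ℝ) : Prop :=
  ∀ n k : ℕ, Tendsto (fun x => x ^ n * iteratedDeriv k f x) (cocompact ℝ) (nhds 0)

noncomputable def barenblatt (p C k : ℝ) (y : ℝ) : ℝ :=
  max (C - k * y ^ 2) 0 ^ (1 / (p - 1))

noncomputable def newmanRalston (p : ℝ) (f B : ℝ → ℝ) : ℝ :=
  (1 / (p - 1)) * ∫ x : ℝ, (f x ^ p - B x ^ p - p * B x ^ (p - 1) * (f x - B x))

lemma Real.rpow_sub_one_mul_self {x p : ℝ} (hx : 0 ≤ x) (hp : p ≠ 0) :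
    x ^ (p - 1) * x = x ^ p := by
  conv_rhs => rw [← sub_add_cancel p 1, Real.rpow_add' hx (by simpa using hp), Real.rpow_one]

lemma integral_rpow_pos {f : ℝ → ℝ} {p : ℝ} (hf : 0 ≤ f) (hp : p ≠ 0)
    (hfp : Integrable (fun x => f x ^ p)) (hmass : (∫ x, f x) ≠ 0) :
    0 < ∫ x, f x ^ p := by
  refine (integral_nonneg fun x => Real.rpow_nonneg (hf x) p).lt_of_ne' fun h => hmass ?_
  have hzero := (integral_eq_zero_iff_of_nonneg (fun x => Real.rpow_nonneg (hf x) p) hfp).mp h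
  refine integral_eq_zero_of_ae ?_
  filter_upwards [hzero] with x hx
  exact (Real.rpow_eq_zero (hf x) hp).mp hx

lemma newmanRalston_le_of_integral_rpow_le {p : ℝ} {f B : ℝ → ℝ} (hp : 1 < p) (hB : 0 ≤ B)
    (hfp : Integrable (fun x => f x ^ p)) (hBp : Integrable (fun x => B x ^ p))
    (hBf : Integrable (fun x => B x ^ (p - 1) * f x))
    (hF : 0 < ∫ x, f x ^ p) (hG : 0 < ∫ x, B x ^ p)
    (hGD : ∫ x, B x ^ p ≤ ∫ x, B x ^ (p - 1) * f x) :
    newmanRalston p f B ≤ (∫ x, f x ^ p) * (renyi p B - renyi p f) := by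
  have hrenyi : renyi p B - renyi p f
      = 1 / (p - 1) * (Real.log (∫ x, f x ^ p) - Real.log (∫ x, B x ^ p)) := by
    rw [renyi, renyi, ← neg_sub p 1, one_div, one_div, inv_neg]
    ring
  have hsplit : ∫ x, (f x ^ p - B x ^ p - p * B x ^ (p - 1) * (f x - B x))
      = (∫ x, f x ^ p) - (∫ x, B x ^ p)
        - p * ((∫ x, B x ^ (p - 1) * f x) - ∫ x, B x ^ p) := by
    have hpoint : ∀ x, f x ^ p - B x ^ p - p * B x ^ (p - 1) * (f x - B x)
        = (f x ^ p - B x ^ p) - p * (B x ^ (p - 1) * f x - B x ^ p) := fun x => by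
      rw [← Real.rpow_sub_one_mul_self (hB x) (by linarith)]; ring
    have h1 : Integrable (fun x => f x ^ p - B x ^ p) := hfp.sub hBp
    have h2 : Integrable (fun x => B x ^ (p - 1) * f x - B x ^ p) := hBf.sub hBp
    simp only [hpoint]
    rw [integral_sub h1 (h2.const_mul p), integral_const_mul, integral_sub hfp hBp,
      integral_sub hBf hBp]
  unfold newmanRalston
  rw [hsplit, hrenyi]
  set F := ∫ x, f x ^ p
  set G := ∫ x, B x ^ p
  set D := ∫ x, B x ^ (p - 1) * f x
  have hp1 : 0 < 1 / (p - 1) := one_div_pos.mpr (sub_pos.mpr hp)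
  have hlog : 1 - G / F ≤ Real.log F - Real.log G := by
    simpa [inv_div, Real.log_div hF.ne' hG.ne'] using
      Real.one_sub_inv_le_log_of_pos (div_pos hF hG)
  calc 1 / (p - 1) * (F - G - p * (D - G)) ≤ 1 / (p - 1) * (F * (1 - G / F)) := by
        refine mul_le_mul_of_nonneg_left ?_ hp1.le
        rw [mul_one_sub, mul_div_cancel₀ G hF.ne']
        nlinarith
    _ ≤ 1 / (p - 1) * (F * (Real.log F - Real.log G)) := by gcongr
    _ = F * (1 / (p - 1) * (Real.log F - Real.log G)) := by ring

section Barenblatt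

variable {p C k : ℝ}

lemma barenblatt_nonneg (y : ℝ) : 0 ≤ barenblatt p C k y :=
  Real.rpow_nonneg (le_max_right _ _) _

lemma barenblatt_rpow_sub_one (hp : 1 < p) (y : ℝ) :
    barenblatt p C k y ^ (p - 1) = max (C - k * y ^ 2) 0 := by
  rw [barenblatt, one_div, Real.rpow_inv_rpow (le_max_right _ _) (by linarith)]

lemma barenblatt_rpow (hp : 1 < p) (y : ℝ) :
    barenblatt p C k y ^ p = (C - k * y ^ 2) * barenblatt p C k y := by
  rw [← Real.rpow_sub_one_mul_self (barenblatt_nonneg y) (by linarith),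
    barenblatt_rpow_sub_one hp]
  rcases le_total 0 (C - k * y ^ 2) with h | h
  · rw [max_eq_left h]
  · rw [barenblatt, max_eq_right h, Real.zero_rpow (by simp; linarith), mul_zero, mul_zero]

lemma continuous_barenblatt (hp : 1 < p) : Continuous (barenblatt p C k) :=
  (continuous_const.sub (continuous_const.mul (continuous_pow 2))).max continuous_const
    |>.rpow_const fun _ => Or.inr (one_div_nonneg.mpr (by linarith))

lemma hasCompactSupport_barenblatt (hp : 1 < p) (hk : 0 < k) :
    HasCompactSupport (barenblatt p C k) := by
  refine HasCompactSupport.intro (isCompact_closedBall 0 √(C / k)) fun y hy => ?_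
  have hy' : √(C / k) < |y| := by simpa using hy
  have hCy : C < k * y ^ 2 := by
    rw [Real.sqrt_lt' ((Real.sqrt_nonneg _).trans_lt hy'), sq_abs, div_lt_iff₀ hk] at hy'
    linarith
  rw [barenblatt, max_eq_right (by linarith), Real.zero_rpow (by simp; linarith)]

lemma integral_barenblatt_rpow (hp : 1 < p) (hk : 0 < k) :
    ∫ y, barenblatt p C k y ^ p
      = C * (∫ y, barenblatt p C k y) - k * ∫ y, y ^ 2 * barenblatt p C k y := by
  have hc := continuous_barenblatt (C := C) (k := k) hp
  have hs := hasCompactSupport_barenblatt (C := C) hp hk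
  have h1 : Integrable (fun y => C * barenblatt p C k y) :=
    (hc.integrable_of_hasCompactSupport hs).const_mul C
  have h2 : Integrable (fun y => k * (y ^ 2 * barenblatt p C k y)) :=
    (((continuous_pow 2).mul hc).integrable_of_hasCompactSupport hs.mul_left).const_mul k
  simp only [barenblatt_rpow hp, sub_mul, mul_assoc]
  rw [integral_sub h1 h2, integral_const_mul, integral_const_mul]

lemma integrable_barenblatt_rpow (hp : 1 < p) (hk : 0 < k) :
    Integrable (fun y => barenblatt p C k y ^ p) := by
  simp only [barenblatt_rpow hp]
  exact ((continuous_const.sub (continuous_const.mul (continuous_pow 2))).mul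
    (continuous_barenblatt hp)).integrable_of_hasCompactSupport
    (hasCompactSupport_barenblatt hp hk).mul_left

lemma integrable_barenblatt_rpow_sub_one_mul (hp : 1 < p) (hk : 0 ≤ k) {f : ℝ → ℝ}
    (hf : Integrable f) : Integrable (fun y => barenblatt p C k y ^ (p - 1) * f y) := by
  simp only [barenblatt_rpow_sub_one hp]
  refine hf.bdd_mul (c := max C 0) ?_ (Eventually.of_forall fun y => ?_)
  · exact ((continuous_const.sub (continuous_const.mul (continuous_pow 2))).max
      continuous_const).aestronglyMeasurable
  · rw [Real.norm_of_nonneg (le_max_right _ _)]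
    exact max_le_max_right 0 (by nlinarith)

lemma le_integral_barenblatt_rpow_sub_one_mul (hp : 1 < p) (hk : 0 ≤ k) {f : ℝ → ℝ}
    (hf0 : 0 ≤ f) (hf : Integrable f) (hf2 : Integrable (fun y => y ^ 2 * f y)) :
    C * (∫ y, f y) - k * ∫ y, y ^ 2 * f y ≤ ∫ y, barenblatt p C k y ^ (p - 1) * f y := by
  calc C * (∫ y, f y) - k * ∫ y, y ^ 2 * f y = ∫ y, (C * f y - k * (y ^ 2 * f y)) := by
        rw [integral_sub (hf.const_mul C) (hf2.const_mul k), integral_const_mul,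
          integral_const_mul]
    _ ≤ ∫ y, barenblatt p C k y ^ (p - 1) * f y := by
        refine integral_mono ((hf.const_mul C).sub (hf2.const_mul k))
          (integrable_barenblatt_rpow_sub_one_mul hp hk hf) fun y => ?_
        rw [barenblatt_rpow_sub_one hp]
        have := mul_le_mul_of_nonneg_right (le_max_left (C - k * y ^ 2) 0) (hf0 y)
        linarith

end Barenblatt

theorem newman_ralston_le_renyi_general
    (p : ℝ) (hp : 1 < p)
    (f : ℝ → ℝ) (hf0 : ∀ x, 0 ≤ f x)
    (hfint : Integrable f) (hfmass : (∫ x : ℝ, f x) = 1)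
    (Θ₀ : ℝ)
    (hfmom_int : Integrable (fun x => x ^ 2 * f x))
    (hfmom : (∫ x : ℝ, x ^ 2 * f x) = Θ₀)
    (hfp : Integrable (fun x => f x ^ p))
    (C k : ℝ) (hk : 0 < k)
    (B : ℝ → ℝ) (hB : ∀ y, B y = (max (C - k * y ^ 2) 0) ^ (1 / (p - 1)))
    (hBmass : (∫ y : ℝ, B y) = 1)
    (hBmom : (∫ y : ℝ, y ^ 2 * B y) = Θ₀) :
    (1 / (p - 1)) *
        ∫ x : ℝ, (f x ^ p - B x ^ p - p * B x ^ (p - 1) * (f x - B x)) ≤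
      (∫ x : ℝ, f x ^ p) * (renyi p B - renyi p f) := by
  obtain rfl : B = barenblatt p C k := funext hB
  have hBp := integrable_barenblatt_rpow (C := C) hp hk
  have hG : ∫ y, barenblatt p C k y ^ p = C - k * Θ₀ := by
    rw [integral_barenblatt_rpow hp hk, hBmass, hBmom, mul_one]
  have hGD : C - k * Θ₀ ≤ ∫ x, barenblatt p C k x ^ (p - 1) * f x := by
    simpa [hfmass, hfmom] using
      le_integral_barenblatt_rpow_sub_one_mul (C := C) hp hk.le hf0 hfint hfmom_int
  refine newmanRalston_le_of_integral_rpow_le hp barenblatt_nonneg hfp hBp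
    (integrable_barenblatt_rpow_sub_one_mul hp hk.le hfint)
    (integral_rpow_pos hf0 (by positivity) hfp (by simp [hfmass]))
    (integral_rpow_pos barenblatt_nonneg (by positivity) hBp (by simp [hBmass])) (hG ▸ hGD)

/-- the Newman–Ralston relative entropy is bounded by the relative
Rényi entropy: `H_p(f|B) ≤ (∫ f^p) (R_p(B) − R_p(f))`. -/
theorem newman_ralston_le_renyi
    (p : ℝ) (hp : 1 < p)
    (f : ℝ → ℝ) (hf0 : ∀ x, 0 ≤ f x)
    (hfint : Integrable f) (hfmass : (∫ x : ℝ, f x) = 1)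
    (Θ₀ : ℝ) (hΘ₀ : 0 < Θ₀)
    (hfmom_int : Integrable (fun x => x ^ 2 * f x))
    (hfmom : (∫ x : ℝ, x ^ 2 * f x) = Θ₀)
    (hfp : Integrable (fun x => f x ^ p))
    (C k : ℝ) (hC : 0 < C) (hk : 0 < k)
    (B : ℝ → ℝ) (hB : ∀ y, B y = (max (C - k * y ^ 2) 0) ^ (1 / (p - 1)))
    (hBmass : (∫ y : ℝ, B y) = 1)
    (hBmom : (∫ y : ℝ, y ^ 2 * B y) = Θ₀) :
    (1 / (p - 1)) *
        ∫ x : ℝ, (f x ^ p - B x ^ p - p * B x ^ (p - 1) * (f x - B x)) ≤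
      (∫ x : ℝ, f x ^ p) * (renyi p B - renyi p f) :=
  newman_ralston_le_renyi_general p hp f hf0 hfint hfmass Θ₀ hfmom_int hfmom hfp C k hk B hB hBmass
    hBmom
end

section
/- Let p > 1, σ > 0, C > 0, and let B(y) = ( C − ((p−1)/p) · y²/(2σ) )_+^{1/(p−1)} for y ∈ ℝ, where (·)_+ denotes the positive part. Then σ ∫_ℝ B(y)^p dy = ∫_ℝ y² B(y) dy. In particular, if B has second moment Θ₀, then ∫_ℝ B^p dy = Θ₀/σ. -/
open MeasureTheory Filter Set

/-! With `q = p / (p - 1)` and `k = (p - 1) / (2σp)` one has `B = f ^ (q - 1)` and `B ^ p = f ^ q`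
for `f y = (C - k y²)₊`. The function `y ↦ y f(y) ^ q` is differentiable with compact support
(`s ↦ s₊ ^ q` is differentiable at `0` because `q > 1`), so its derivative `f ^ q - 2kq y² f ^ (q - 1)` integrates
to zero over `ℝ`; and `2kq = 1/σ`. -/

open Real

lemma hasDerivAt_max_zero_rpow {q : ℝ} (hq : 1 < q) (t : ℝ) :
    HasDerivAt (fun s : ℝ => max s 0 ^ q) (q * max t 0 ^ (q - 1)) t := by
  have hq0 : q ≠ 0 := by linarith
  have hq1 : q - 1 ≠ 0 := by linarith
  rcases lt_trichotomy t 0 with ht | rfl | ht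
  · have hzero : (fun s : ℝ => max s 0 ^ q) =ᶠ[nhds t] fun _ => 0 := by
      filter_upwards [eventually_lt_nhds ht] with s hs
      rw [max_eq_right hs.le, zero_rpow hq0]
    simpa [max_eq_right ht.le, zero_rpow hq1] using
      (hasDerivAt_const t (0 : ℝ)).congr_of_eventuallyEq hzero
  · simp only [max_self, zero_rpow hq1, mul_zero]
    rw [hasDerivAt_iff_tendsto_slope]
    have hslope : ∀ s : ℝ, ‖slope (fun s : ℝ => max s 0 ^ q) 0 s‖ ≤ |s| ^ (q - 1) := by
      intro s
      rcases le_or_gt s 0 with hs | hs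
      · simp [slope_def_field, max_eq_right hs, zero_rpow hq0]
        positivity
      · rw [slope_def_field, max_eq_left hs.le, max_self, zero_rpow hq0, sub_zero, sub_zero,
          ← rpow_sub_one hs.ne', norm_of_nonneg (by positivity), abs_of_pos hs]
    have hlim : Tendsto (fun s : ℝ => |s| ^ (q - 1)) (nhds 0) (nhds 0) :=
      (continuous_abs.rpow_const fun _ => Or.inr (sub_nonneg.2 hq.le)).tendsto' 0 0
        (by simp [zero_rpow hq1])
    exact squeeze_zero_norm hslope (hlim.mono_left nhdsWithin_le_nhds)
  · have hid : (fun s : ℝ => max s 0 ^ q) =ᶠ[nhds t] fun s => s ^ q := by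
      filter_upwards [eventually_gt_nhds ht] with s hs
      rw [max_eq_left hs.le]
    simpa [max_eq_left ht.le] using (hasDerivAt_rpow_const (Or.inl ht.ne')).congr_of_eventuallyEq hid

lemma hasCompactSupport_max_sub_mul_sq (C : ℝ) {k : ℝ} (hk : 0 < k) :
    HasCompactSupport fun y : ℝ => max (C - k * y ^ 2) 0 := by
  refine HasCompactSupport.intro (isCompact_closedBall 0 (√(C / k))) fun y hy => ?_
  rw [Metric.mem_closedBall, dist_zero_right, not_le, norm_eq_abs,
    sqrt_lt' ((sqrt_nonneg _).trans_lt hy), sq_abs, div_lt_iff₀ hk] at hy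
  exact max_eq_right (by linarith)

theorem integral_max_sub_mul_sq_rpow (C : ℝ) {k q : ℝ} (hk : 0 < k) (hq : 1 < q) :
    ∫ y, max (C - k * y ^ 2) 0 ^ q =
      2 * k * q * ∫ y, y ^ 2 * max (C - k * y ^ 2) 0 ^ (q - 1) := by
  set f : ℝ → ℝ := fun y => max (C - k * y ^ 2) 0 with hf
  have hcont : ∀ r : ℝ, 0 < r → Continuous fun y => f y ^ r := fun r hr =>
    (show Continuous f by fun_prop).rpow_const fun _ => Or.inr hr.le
  have hsupp : ∀ r : ℝ, 0 < r → HasCompactSupport fun y => f y ^ r := fun r hr =>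
    (hasCompactSupport_max_sub_mul_sq C hk).comp_left (g := fun x : ℝ => x ^ r) (zero_rpow hr.ne')
  have hint : ∀ (n : ℕ) (r : ℝ), 0 < r → Integrable fun y => y ^ n * f y ^ r := fun n r hr =>
    ((continuous_pow n).mul (hcont r hr)).integrable_of_hasCompactSupport (hsupp r hr).mul_left
  have hderiv : ∀ y, HasDerivAt (fun y => y * f y ^ q)
      (f y ^ q - 2 * k * q * (y ^ 2 * f y ^ (q - 1))) y := by
    intro y
    have hg : HasDerivAt (fun y : ℝ => C - k * y ^ 2) (-(k * (2 * y))) y := by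
      simpa using ((hasDerivAt_pow 2 y).const_mul k).const_sub C
    refine ((hasDerivAt_id' y).mul ((hasDerivAt_max_zero_rpow hq _).comp y hg)).congr_deriv ?_
    simp only [hf, Function.comp_apply]
    ring
  have hq0 : 0 < q := by linarith
  have hfq : Integrable fun y => f y ^ q := by simpa using hint 0 q hq0
  have hmoment : Integrable fun y => 2 * k * q * (y ^ 2 * f y ^ (q - 1)) :=
    (hint 2 (q - 1) (by linarith)).const_mul _
  have hzero := integral_eq_zero_of_hasDerivAt_of_integrable hderiv (hfq.sub hmoment)
    (by simpa using hint 1 q hq0)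
  rwa [integral_sub hfq hmoment, integral_const_mul, sub_eq_zero] at hzero

theorem barenblatt_moment_identity_general
    (p σ C : ℝ) (hp : 1 < p) (hσ : 0 < σ)
    (B : ℝ → ℝ)
    (hB : ∀ y, B y = (max (C - (p - 1) / p * y ^ 2 / (2 * σ)) 0) ^ (1 / (p - 1))) :
    σ * (∫ y : ℝ, B y ^ p) = (∫ y : ℝ, y ^ 2 * B y) ∧
      ∀ Θ₀ : ℝ, (∫ y : ℝ, y ^ 2 * B y) = Θ₀ → (∫ y : ℝ, B y ^ p) = Θ₀ / σ := by
  have hp1 : 0 < p - 1 := by linarith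
  set k := (p - 1) / p / (2 * σ) with hk_def
  set q := p / (p - 1) with hq_def
  have hk : 0 < k := by positivity
  have hq : 1 < q := (one_lt_div hp1).mpr (by linarith)
  have hB' : ∀ y, B y = max (C - k * y ^ 2) 0 ^ (q - 1) := fun y => by
    rw [hB y]
    congr 2
    · ring
    · rw [hq_def]
      field_simp
      ring
  have hBp : ∀ y, B y ^ p = max (C - k * y ^ 2) 0 ^ q := fun y => by
    rw [hB' y, ← rpow_mul (le_max_right _ _)]
    congr 1
    rw [hq_def]
    field_simp
    ring
  have hσkq : σ * (2 * k * q) = 1 := by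
    rw [hk_def, hq_def]
    field_simp
  have moment : σ * ∫ y, B y ^ p = ∫ y, y ^ 2 * B y := by
    simp only [hBp]
    simp only [hB']
    rw [integral_max_sub_mul_sq_rpow C hk hq, ← mul_assoc, hσkq, one_mul]
  refine ⟨moment, fun Θ₀ hΘ => ?_⟩
  rw [eq_div_iff hσ.ne', ← hΘ, ← moment, mul_comm]

/-- for the Barenblatt profile
`B(y) = (C − ((p−1)/p) y²/(2σ))₊^{1/(p−1)}` one has `σ ∫ B^p = ∫ y² B`; in
particular, if the second moment equals `Θ₀` then `∫ B^p = Θ₀/σ`. -/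
theorem barenblatt_moment_identity
    (p σ C : ℝ) (hp : 1 < p) (hσ : 0 < σ) (hC : 0 < C)
    (B : ℝ → ℝ)
    (hB : ∀ y, B y = (max (C - (p - 1) / p * y ^ 2 / (2 * σ)) 0) ^ (1 / (p - 1))) :
    σ * (∫ y : ℝ, B y ^ p) = (∫ y : ℝ, y ^ 2 * B y) ∧
      ∀ Θ₀ : ℝ, (∫ y : ℝ, y ^ 2 * B y) = Θ₀ → (∫ y : ℝ, B y ^ p) = Θ₀ / σ :=
  barenblatt_moment_identity_general p σ C hp hσ B hB
end

section
/- Let p > 1, Θ₀ > 0, and let B(y) = ( C − ((p−1)/p) · y²/(2σ) )_+^{1/(p−1)} be a Barenblatt profile with C, σ > 0 such that ∫_ℝ B dy = 1, ∫_ℝ y² B dy = Θ₀, and σ = √Θ₀ / ( p √(2 I_p(B)) ). Then on the open set {y : B(y) > 0} one has p · d/dy (ln_p B)(y) = −y/σ, and B is a pointwise steady state of the nonlocal rescaled equation there, i.e. (1/I_p(B)) · d²/dy²( B^p · d²/dy²(ln_p B) )(y) = (2p/Θ₀) · d/dy( y B(y) ) for every y with B(y) > 0. -/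
open MeasureTheory Filter Set
open Topology

/-!
On the positivity set the Barenblatt profile is `B = P^(1/(p-1))` with the quadratic pressure
`P y = C - (p-1)/p · y²/(2σ)`, so `ln_p B = (P - 1)/(p-1)` has derivative `-y/(pσ)` and constant
second derivative `-1/(pσ)`. Hence `B^p (ln_p B)'' = -P^(p/(p-1))/(pσ)`, whose derivative is
`y B/(pσ²)`, and the choice of `σ` turns `1/(I_p(B) pσ²)` into `2p/Θ₀`.
-/

theorem lnp_rpow_one_div_sub_one {p u : ℝ} (hp : p ≠ 1) (hu : 0 ≤ u) :
    lnp p (u ^ (1 / (p - 1))) = (u - 1) / (p - 1) := by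
  have hp1 : p - 1 ≠ 0 := sub_ne_zero.mpr hp
  rw [lnp, if_neg hp, ← Real.rpow_mul hu, one_div_mul_cancel hp1, Real.rpow_one]

noncomputable def barenblattPressure (p C σ y : ℝ) : ℝ :=
  C - (p - 1) / p * y ^ 2 / (2 * σ)

theorem hasDerivAt_barenblattPressure (p C σ y : ℝ) :
    HasDerivAt (barenblattPressure p C σ) (-((p - 1) / p * (2 * y) / (2 * σ))) y := by
  have hsq : HasDerivAt (fun x : ℝ => x ^ 2) (2 * y) y := by
    simpa using hasDerivAt_pow 2 y
  exact ((hsq.const_mul ((p - 1) / p)).div_const (2 * σ)).const_sub C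

theorem continuous_barenblattPressure (p C σ : ℝ) : Continuous (barenblattPressure p C σ) :=
  continuous_iff_continuousAt.mpr fun y => (hasDerivAt_barenblattPressure p C σ y).continuousAt

section Profile

variable {p C σ : ℝ} {B : ℝ → ℝ}

theorem eventually_barenblattPressure_pos (hp : p ≠ 1)
    (hB : ∀ z, B z = max (barenblattPressure p C σ z) 0 ^ (1 / (p - 1))) {y : ℝ}
    (hy : 0 < B y) : ∀ᶠ z in 𝓝 y, 0 < barenblattPressure p C σ z := by
  have hpos : 0 < barenblattPressure p C σ y := by
    by_contra! hle
    have hexp : 1 / (p - 1) ≠ 0 := one_div_ne_zero (sub_ne_zero.mpr hp)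
    rw [hB y, max_eq_right hle, Real.zero_rpow hexp] at hy
    exact hy.false
  exact (continuous_barenblattPressure p C σ).continuousAt.eventually (eventually_gt_nhds hpos)

theorem deriv_lnp_barenblatt_eventuallyEq (hp : 1 < p) (hσ : σ ≠ 0)
    (hB : ∀ z, B z = max (barenblattPressure p C σ z) 0 ^ (1 / (p - 1))) {y : ℝ}
    (hy : 0 < B y) :
    deriv (fun z => lnp p (B z)) =ᶠ[𝓝 y] fun z => -(z / (p * σ)) := by
  have hp1 : p - 1 ≠ 0 := by linarith
  have hp0 : p ≠ 0 := by linarith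
  have hlnp : (fun z => lnp p (B z)) =ᶠ[𝓝 y]
      fun z => (barenblattPressure p C σ z - 1) / (p - 1) := by
    filter_upwards [eventually_barenblattPressure_pos hp.ne' hB hy] with z hz
    rw [hB z, max_eq_left hz.le, lnp_rpow_one_div_sub_one hp.ne' hz.le]
  refine hlnp.deriv.trans (Eventually.of_forall fun z => ?_)
  rw [(((hasDerivAt_barenblattPressure p C σ z).sub_const 1).div_const (p - 1)).deriv]
  field_simp

theorem deriv_deriv_lnp_barenblatt_eventuallyEq (hp : 1 < p) (hσ : σ ≠ 0)
    (hB : ∀ z, B z = max (barenblattPressure p C σ z) 0 ^ (1 / (p - 1))) {y : ℝ}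
    (hy : 0 < B y) :
    deriv (deriv fun z => lnp p (B z)) =ᶠ[𝓝 y] fun _ => -(1 / (p * σ)) := by
  refine (deriv_lnp_barenblatt_eventuallyEq hp hσ hB hy).deriv.trans
    (Eventually.of_forall fun z => ?_)
  simp

theorem deriv_rpow_mul_deriv_deriv_lnp_barenblatt_eventuallyEq (hp : 1 < p) (hσ : σ ≠ 0)
    (hB : ∀ z, B z = max (barenblattPressure p C σ z) 0 ^ (1 / (p - 1))) {y : ℝ}
    (hy : 0 < B y) :
    deriv (fun z => B z ^ p * deriv (deriv fun w => lnp p (B w)) z) =ᶠ[𝓝 y]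
      fun z => 1 / (p * σ ^ 2) * (z * B z) := by
  have hp1 : p - 1 ≠ 0 := by linarith
  have hp0 : p ≠ 0 := by linarith
  set P := barenblattPressure p C σ
  have hexp : 1 / (p - 1) * p - 1 = 1 / (p - 1) := by
    field_simp
    ring
  have hP := eventually_barenblattPressure_pos hp.ne' hB hy
  have hflux : (fun z => B z ^ p * deriv (deriv fun w => lnp p (B w)) z) =ᶠ[𝓝 y]
      fun z => P z ^ (1 / (p - 1) * p) * -(1 / (p * σ)) := by
    filter_upwards [hP, deriv_deriv_lnp_barenblatt_eventuallyEq hp hσ hB hy] with z hz hz'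
    rw [hB z, max_eq_left hz.le, hz', Real.rpow_mul hz.le]
  refine hflux.deriv.trans ?_
  filter_upwards [hP] with z hz
  have hd := ((hasDerivAt_barenblattPressure p C σ z).rpow_const
    (p := 1 / (p - 1) * p) (Or.inl hz.ne')).mul_const (-(1 / (p * σ)))
  rw [hd.deriv, hexp, hB z, max_eq_left hz.le]
  field_simp

theorem deriv_deriv_rpow_mul_deriv_deriv_lnp_barenblatt (hp : 1 < p) (hσ : σ ≠ 0)
    (hB : ∀ z, B z = max (barenblattPressure p C σ z) 0 ^ (1 / (p - 1))) {y : ℝ}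
    (hy : 0 < B y) :
    deriv (deriv fun z => B z ^ p * deriv (deriv fun w => lnp p (B w)) z) y =
      1 / (p * σ ^ 2) * deriv (fun z => z * B z) y := by
  rw [(deriv_rpow_mul_deriv_deriv_lnp_barenblatt_eventuallyEq hp hσ hB hy).deriv_eq]
  exact deriv_const_mul_field _

end Profile

theorem one_div_mul_one_div_mul_sq_eq {p Θ I σ : ℝ} (hΘ : 0 ≤ Θ) (hσ : 0 < σ)
    (hσdef : σ = Real.sqrt Θ / (p * Real.sqrt (2 * I))) :
    1 / I * (1 / (p * σ ^ 2)) = 2 * p / Θ := by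
  have hI : 0 < I := by
    by_contra! hI
    rw [hσdef, Real.sqrt_eq_zero'.mpr (by linarith : 2 * I ≤ 0), mul_zero, div_zero] at hσ
    exact hσ.false
  have hp : p ≠ 0 := by
    rintro rfl
    rw [hσdef, zero_mul, div_zero] at hσ
    exact hσ.false
  have hΘ0 : Θ ≠ 0 := by
    rintro rfl
    rw [hσdef, Real.sqrt_zero, zero_div] at hσ
    exact hσ.false
  have hσsq : σ ^ 2 = Θ / (2 * I * p ^ 2) := by
    rw [hσdef, div_pow, mul_pow, Real.sq_sqrt hΘ, Real.sq_sqrt (by linarith)]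
    ring
  rw [hσsq]
  field_simp

theorem barenblatt_steady_state_general
    (p Θ₀ C σ : ℝ) (hp : 1 < p) (hΘ₀ : 0 < Θ₀) (hσ : 0 < σ)
    (B : ℝ → ℝ)
    (hB : ∀ y, B y = (max (C - (p - 1) / p * y ^ 2 / (2 * σ)) 0) ^ (1 / (p - 1)))
    (hσdef : σ = Real.sqrt Θ₀ / (p * Real.sqrt (2 * fisherP p B))) :
    ∀ y : ℝ, 0 < B y →
      p * deriv (fun z => lnp p (B z)) y = -(y / σ) ∧
      (1 / fisherP p B) *
          deriv (deriv (fun z =>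
            (B z) ^ p * deriv (deriv (fun w => lnp p (B w))) z)) y =
        (2 * p / Θ₀) * deriv (fun z => z * B z) y := by
  intro y hy
  have hB' : ∀ z, B z = max (barenblattPressure p C σ z) 0 ^ (1 / (p - 1)) := hB
  refine ⟨?_, ?_⟩
  · rw [(deriv_lnp_barenblatt_eventuallyEq hp hσ.ne' hB' hy).self_of_nhds]
    field_simp
  · rw [deriv_deriv_rpow_mul_deriv_deriv_lnp_barenblatt hp hσ.ne' hB' hy, ← mul_assoc,
      one_div_mul_one_div_mul_sq_eq hΘ₀.le hσ hσdef]

/-- with `σ = √Θ₀/(p√(2 I_p(B)))`, the Barenblatt profile satisfies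
`p (ln_p B)' = −y/σ` on its positivity set, and is a pointwise steady state of the
nonlocal rescaled equation there. -/
theorem barenblatt_steady_state
    (p Θ₀ C σ : ℝ) (hp : 1 < p) (hΘ₀ : 0 < Θ₀) (hC : 0 < C) (hσ : 0 < σ)
    (B : ℝ → ℝ)
    (hB : ∀ y, B y = (max (C - (p - 1) / p * y ^ 2 / (2 * σ)) 0) ^ (1 / (p - 1)))
    (hBmass : (∫ y : ℝ, B y) = 1)
    (hBmom : (∫ y : ℝ, y ^ 2 * B y) = Θ₀)
    (hσdef : σ = Real.sqrt Θ₀ / (p * Real.sqrt (2 * fisherP p B))) :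
    ∀ y : ℝ, 0 < B y →
      p * deriv (fun z => lnp p (B z)) y = -(y / σ) ∧
      (1 / fisherP p B) *
          deriv (deriv (fun z =>
            (B z) ^ p * deriv (deriv (fun w => lnp p (B w))) z)) y =
        (2 * p / Θ₀) * deriv (fun z => z * B z) y :=
  barenblatt_steady_state_general p Θ₀ C σ hp hΘ₀ hσ B hB hσdef
end

section
/- Let c > 0 and let R : [0, ∞) → [0, ∞) be differentiable with R′(τ) ≤ −c ( exp(2 R(τ)) − 1 ) for all τ ≥ 0. Then for all τ > 0: R(τ) ≤ −(1/2) ln( 1 − ( 1 − exp(−2 R(0)) ) exp(−2cτ) ). -/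
open MeasureTheory Filter Set

open Real

section SeparationOfVariables

variable {c : ℝ} {R : ℝ → ℝ}

/- `(1 - e^{-2R}) e^{2ct}` is the first integral of `R' = -c (e^{2R} - 1)` obtained by separating
variables; along a subsolution its derivative carries the sign of `R' + c (e^{2R} - 1)`. -/
theorem hasDerivAt_one_sub_exp_mul_exp {R' t : ℝ} (hR : HasDerivAt R R' t) :
    HasDerivAt (fun s => (1 - exp (-2 * R s)) * exp (2 * c * s))
      (2 * exp (2 * c * t) * exp (-2 * R t) * (R' + c * (exp (2 * R t) - 1))) t := by
  have hderiv := ((hR.const_mul (-2)).exp.const_sub 1).mul ((hasDerivAt_id' t).const_mul (2 * c)).exp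
  refine hderiv.congr_deriv ?_
  have hinv : exp (-2 * R t) * exp (2 * R t) = 1 := by rw [← exp_add]; simp
  linear_combination -2 * c * exp (2 * c * t) * hinv

theorem antitoneOn_one_sub_exp_mul_exp (hdiff : ∀ t, 0 ≤ t → DifferentiableAt ℝ R t)
    (hineq : ∀ t, 0 ≤ t → deriv R t ≤ -c * (exp (2 * R t) - 1)) :
    AntitoneOn (fun s => (1 - exp (-2 * R s)) * exp (2 * c * s)) (Ici 0) := by
  have hderiv t (ht : 0 ≤ t) := hasDerivAt_one_sub_exp_mul_exp (c := c) (hdiff t ht).hasDerivAt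
  refine antitoneOn_of_hasDerivWithinAt_nonpos (convex_Ici 0)
    (f' := fun t => 2 * exp (2 * c * t) * exp (-2 * R t) * (deriv R t + c * (exp (2 * R t) - 1)))
    (fun t ht => (hderiv t ht).continuousAt.continuousWithinAt) ?_ ?_
  · intro t ht
    rw [interior_Ici] at ht
    exact (hderiv t (le_of_lt ht)).hasDerivWithinAt
  · intro t ht
    rw [interior_Ici] at ht
    have hsub : deriv R t + c * (exp (2 * R t) - 1) ≤ 0 := by linarith [hineq t (le_of_lt ht)]
    exact mul_nonpos_of_nonneg_of_nonpos (by positivity) hsub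

theorem one_sub_exp_le_mul_exp (hdiff : ∀ t, 0 ≤ t → DifferentiableAt ℝ R t)
    (hineq : ∀ t, 0 ≤ t → deriv R t ≤ -c * (exp (2 * R t) - 1)) {t : ℝ} (ht : 0 ≤ t) :
    1 - exp (-2 * R t) ≤ (1 - exp (-2 * R 0)) * exp (-2 * c * t) := by
  have hmono := antitoneOn_one_sub_exp_mul_exp hdiff hineq (mem_Ici.2 le_rfl) ht ht
  simp only [mul_zero, exp_zero, mul_one] at hmono
  calc 1 - exp (-2 * R t)
      = (1 - exp (-2 * R t)) * exp (2 * c * t) * exp (-2 * c * t) := by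
        rw [mul_assoc, ← exp_add]; simp
    _ ≤ (1 - exp (-2 * R 0)) * exp (-2 * c * t) := by gcongr

end SeparationOfVariables

theorem one_sub_one_sub_exp_mul_exp_pos (u : ℝ) {v : ℝ} (hv : v ≤ 0) :
    0 < 1 - (1 - exp u) * exp v := by
  nlinarith [mul_pos (exp_pos u) (exp_pos v), exp_le_one_iff.2 hv]

theorem ode_inequality_decay_general
    (c : ℝ) (hc : 0 < c) (R : ℝ → ℝ)
    (hdiff : ∀ τ : ℝ, 0 ≤ τ → DifferentiableAt ℝ R τ)
    (hineq : ∀ τ : ℝ, 0 ≤ τ → deriv R τ ≤ -c * (Real.exp (2 * R τ) - 1)) :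
    ∀ τ : ℝ, 0 < τ →
      R τ ≤ -(1 / 2) *
        Real.log (1 - (1 - Real.exp (-2 * R 0)) * Real.exp (-2 * c * τ)) := by
  intro τ hτ
  have hpos := one_sub_one_sub_exp_mul_exp_pos (-2 * R 0) (v := -2 * c * τ) (by nlinarith)
  have hlog : log (1 - (1 - exp (-2 * R 0)) * exp (-2 * c * τ)) ≤ -2 * R τ := by
    rw [← log_exp (-2 * R τ)]
    exact log_le_log hpos (by linarith [one_sub_exp_le_mul_exp hdiff hineq hτ.le])
  linarith

/-- explicit solution of the differential inequality
`R' ≤ −c(e^{2R} − 1)` with nonnegative values: for all `τ > 0`,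
`R(τ) ≤ −(1/2) ln(1 − (1 − e^{−2R(0)}) e^{−2cτ})`. -/
theorem ode_inequality_decay
    (c : ℝ) (hc : 0 < c) (R : ℝ → ℝ)
    (hR0 : ∀ τ : ℝ, 0 ≤ τ → 0 ≤ R τ)
    (hdiff : ∀ τ : ℝ, 0 ≤ τ → DifferentiableAt ℝ R τ)
    (hineq : ∀ τ : ℝ, 0 ≤ τ → deriv R τ ≤ -c * (Real.exp (2 * R τ) - 1)) :
    ∀ τ : ℝ, 0 < τ →
      R τ ≤ -(1 / 2) *
        Real.log (1 - (1 - Real.exp (-2 * R 0)) * Real.exp (-2 * c * τ)) :=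
  ode_inequality_decay_general c hc R hdiff hineq
end

section
/- Let v : ℝ → ℝ be C^∞, strictly positive, and such that v together with all its derivatives decays faster than any polynomial as |y| → ∞, with ∫_ℝ v^{1/2} (v″)² dy < ∞ and ∫_ℝ v^{−3/2} (v′)⁴ dy < ∞. Then 4 ∫_ℝ v^{3/2} ( (v^{1/2})″ )² dy = ∫_ℝ v^{1/2} (v″)² dy + (1/12) ∫_ℝ v^{−3/2} (v′)⁴ dy. -/
open MeasureTheory Filter Set

lemma aux_pows (a : ℝ) (ha : 0 < a) :
    ∃ s : ℝ, 0 < s ∧ a ^ ((1:ℝ)/2) = s^2 ∧ a ^ ((3:ℝ)/2) = s^6 ∧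
      a ^ (-(1:ℝ)/2) = (s^2)⁻¹ ∧ a ^ (-(3:ℝ)/2) = (s^6)⁻¹ := by
  refine ⟨a ^ ((1:ℝ)/4), Real.rpow_pos_of_pos ha _, ?_, ?_, ?_, ?_⟩
  · rw [← Real.rpow_natCast (a ^ ((1:ℝ)/4)) 2, ← Real.rpow_mul ha.le]; norm_num
  · rw [← Real.rpow_natCast (a ^ ((1:ℝ)/4)) 6, ← Real.rpow_mul ha.le]; norm_num
  · rw [← Real.rpow_natCast (a ^ ((1:ℝ)/4)) 2, ← Real.rpow_mul ha.le,
      ← Real.rpow_neg ha.le]; norm_num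
  · rw [← Real.rpow_natCast (a ^ ((1:ℝ)/4)) 6, ← Real.rpow_mul ha.le,
      ← Real.rpow_neg ha.le]; norm_num

lemma pointwise_key (a b c : ℝ) (ha : 0 < a) :
    4 * (a ^ ((3:ℝ)/2) * ((1/2) * a ^ (-(1:ℝ)/2) * c - (1/4) * a ^ (-(3:ℝ)/2) * b^2)^2)
    = a ^ ((1:ℝ)/2) * c^2 - a ^ (-(1:ℝ)/2) * (c * b^2) + (1/4) * (a ^ (-(3:ℝ)/2) * b^4) := by
  obtain ⟨s, hs, h2, h6, h2', h6'⟩ := aux_pows a ha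
  rw [h2, h6, h2', h6']
  field_simp
  ring

lemma abs_bound (a b c : ℝ) (ha : 0 < a) :
    |a ^ (-(1:ℝ)/2) * (c * b^2)| ≤
      1/2 * (a ^ ((1:ℝ)/2) * c^2 + a ^ (-(3:ℝ)/2) * b^4) := by
  obtain ⟨s, hs, h2, h6, h2', h6'⟩ := aux_pows a ha
  rw [h2, h2', h6']
  have huw : |(s^2)⁻¹ * (c * b^2)| = (s*|c|) * ((s^3)⁻¹ * b^2) := by
    rw [abs_mul, abs_mul, abs_inv, abs_pow, abs_pow, abs_of_pos hs, sq_abs]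
    field_simp
  have h := two_mul_le_add_sq (s*|c|) ((s^3)⁻¹ * b^2)
  have hsq : (s*|c|)^2 = s^2*c^2 := by rw [mul_pow, sq_abs]
  have hsq2 : ((s^3)⁻¹*b^2)^2 = (s^6)⁻¹ * b^4 := by
    field_simp
  rw [huw]
  nlinarith [h, hsq, hsq2]

lemma lim_zero_aux (v : ℝ → ℝ) (hpos : ∀ y, 0 < v y)
    (hF : Integrable (fun y => v y ^ (-(3:ℝ)/2) * (deriv v y)^4))
    {l : Filter ℝ}
    (hv0 : Tendsto v l (nhds 0)) (hdv0 : Tendsto (deriv v) l (nhds 0))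
    (hvol : ∀ s ∈ l, volume s = ⊤)
    {L : ℝ} (hg : Tendsto (fun y => v y ^ (-(1:ℝ)/2) * (deriv v y)^3) l (nhds L)) :
    L = 0 := by
  by_contra hL
  have hc : (0:ℝ) < L^2/4 := by positivity
  have h1 : ∀ᶠ y in l, |v y ^ (-(1:ℝ)/2) * (deriv v y)^3 - L| < |L|/2 := by
    have := Metric.tendsto_nhds.mp hg (|L|/2) (by positivity)
    simpa [Real.dist_eq] using this
  have h2 : ∀ᶠ y in l, v y ≤ 1 := by
    have := Metric.tendsto_nhds.mp hv0 1 one_pos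
    filter_upwards [this] with y hy
    rw [Real.dist_eq, sub_zero] at hy
    exact (le_abs_self _).trans hy.le
  have h3 : ∀ᶠ y in l, (deriv v y)^2 ≤ 1 := by
    have := Metric.tendsto_nhds.mp hdv0 1 one_pos
    filter_upwards [this] with y hy
    rw [Real.dist_eq, sub_zero] at hy
    nlinarith [abs_nonneg (deriv v y), le_abs_self (deriv v y), neg_abs_le (deriv v y)]
  have hkey : ∀ᶠ y in l, L^2/4 ≤ v y ^ (-(3:ℝ)/2) * (deriv v y)^4 := by
    filter_upwards [h1, h2, h3] with y hy1 hy2 hy3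
    set g := v y ^ (-(1:ℝ)/2) * (deriv v y)^3 with hgdef
    have hgabs : |L|/2 ≤ |g| := by
      have := abs_sub_abs_le_abs_sub g L
      have h' := abs_sub_comm g L
      nlinarith [abs_sub_abs_le_abs_sub L g, hy1, abs_sub_comm L g]
    have hg2 : L^2/4 ≤ g^2 := by
      have : (|L| / 2) ^ 2 ≤ |g| ^ 2 := by nlinarith [abs_nonneg L, abs_nonneg g]
      nlinarith [this, sq_abs L, sq_abs g]
    obtain ⟨s, hs, hhalf, _, hinv2, hinv6⟩ := aux_pows (v y) (hpos y)
    have hvhalf : v y ^ ((1:ℝ)/2) ≤ 1 := Real.rpow_le_one (hpos y).le hy2 (by norm_num)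
    rw [hhalf] at hvhalf
    have hvinv : (1:ℝ) ≤ (s^2)⁻¹ := (one_le_inv₀ (by positivity)).2 hvhalf
    have step1 : (s^6)⁻¹ * (deriv v y)^4 * (deriv v y)^2 ≤ (s^6)⁻¹ * (deriv v y)^4 := by
      nlinarith [hy3, mul_nonneg (by positivity : (0:ℝ) ≤ (s^6)⁻¹)
        (by positivity : (0:ℝ) ≤ (deriv v y)^4)]
    have hid : (s^6)⁻¹ * (deriv v y)^4 * (deriv v y)^2 = g^2 * (s^2)⁻¹ := by
      rw [hgdef, hinv2]; field_simp
    have step2 : g^2 ≤ g^2 * (s^2)⁻¹ := by nlinarith [sq_nonneg g, hvinv]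
    rw [hinv6] at *
    rw [hid] at step1
    linarith
  have hmem : {y | L^2/4 ≤ v y ^ (-(3:ℝ)/2) * (deriv v y)^4} ∈ l := hkey
  have hfin := hF.measure_ge_lt_top hc
  rw [hvol _ hmem] at hfin
  exact (lt_irrefl _ hfin).elim

/-- the identity
`4 ∫ v^{3/2} ((v^{1/2})″)² = ∫ v^{1/2} (v″)² + (1/12) ∫ v^{−3/2} (v′)⁴`
for smooth positive rapidly decaying `v`. -/
theorem thin_film_K_identity
    (v : ℝ → ℝ) (hsmooth : ContDiff ℝ (⊤ : ℕ∞) v) (hpos : ∀ y, 0 < v y)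
    (hdecay : RapidDecay v)
    (hint1 : Integrable (fun y => v y ^ ((1 : ℝ) / 2) * (deriv (deriv v) y) ^ 2))
    (hint2 : Integrable (fun y => v y ^ (-(3 : ℝ) / 2) * (deriv v y) ^ 4)) :
    4 * ∫ y : ℝ, v y ^ ((3 : ℝ) / 2) *
        (deriv (deriv (fun z => v z ^ ((1 : ℝ) / 2))) y) ^ 2 =
      (∫ y : ℝ, v y ^ ((1 : ℝ) / 2) * (deriv (deriv v) y) ^ 2) +
        (1 / 12) * ∫ y : ℝ, v y ^ (-(3 : ℝ) / 2) * (deriv v y) ^ 4 := by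
  have hsm : ContDiff ℝ ((⊤ : ℕ∞) : WithTop ℕ∞) v := hsmooth.of_le (by simp)
  have hdv : ∀ x, HasDerivAt v (deriv v x) x :=
    fun x => (hsm.differentiable (by simp) x).hasDerivAt
  have hcd : ContDiff ℝ ((⊤ : ℕ∞) : WithTop ℕ∞) (deriv v) := (contDiff_infty_iff_deriv.mp hsm).2
  have hdv2 : ∀ x, HasDerivAt (deriv v) (deriv (deriv v) x) x :=
    fun x => (hcd.differentiable (by simp) x).hasDerivAt
  have hcont_v : Continuous v := hsmooth.continuous
  have hcont_dv : Continuous (deriv v) := hcd.continuous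
  have hcont_ddv : Continuous (deriv (deriv v)) := (contDiff_infty_iff_deriv.mp hcd).2.continuous
  have hrpow : ∀ (p : ℝ) (x : ℝ),
      HasDerivAt (fun y => v y ^ p) (p * v x ^ (p-1) * deriv v x) x := by
    intro p x
    have h := (Real.hasDerivAt_rpow_const (p := p) (Or.inl (hpos x).ne')).comp x (hdv x)
    exact h
  set w : ℝ → ℝ := fun z => v z ^ ((1:ℝ)/2) with hw
  have hw1 : ∀ x, HasDerivAt w ((1/2) * v x ^ (-(1:ℝ)/2) * deriv v x) x := by
    intro x
    have := hrpow ((1:ℝ)/2) x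
    norm_num at this ⊢
    convert this using 2 <;> norm_num
  have hderivw : deriv w = fun x => (1/2) * v x ^ (-(1:ℝ)/2) * deriv v x :=
    funext fun x => (hw1 x).deriv
  have hw2 : ∀ x, HasDerivAt (deriv w)
      ((1/2) * v x ^ (-(1:ℝ)/2) * deriv (deriv v) x
        - (1/4) * v x ^ (-(3:ℝ)/2) * (deriv v x)^2) x := by
    intro x
    rw [hderivw]
    have h1 := ((hrpow (-(1:ℝ)/2) x).const_mul (1/2 : ℝ)).mul (hdv2 x)
    have he : v x ^ (-(1:ℝ)/2 - 1) = v x ^ (-(3:ℝ)/2) := by norm_num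
    refine h1.congr_deriv ?_
    rw [he]
    ring
  have hg : ∀ x, HasDerivAt (fun y => v y ^ (-(1:ℝ)/2) * (deriv v y)^3)
      (3 * (v x ^ (-(1:ℝ)/2) * (deriv (deriv v) x * (deriv v x)^2))
        - (1/2) * (v x ^ (-(3:ℝ)/2) * (deriv v x)^4)) x := by
    intro x
    have h1 := (hrpow (-(1:ℝ)/2) x).mul ((hdv2 x).pow 3)
    have he : v x ^ (-(1:ℝ)/2 - 1) = v x ^ (-(3:ℝ)/2) := by norm_num
    refine h1.congr_deriv ?_
    rw [he]
    simp only [Pi.pow_apply]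
    ring
  -- integrability of the cross term
  have hf2int : Integrable
      (fun y => v y ^ (-(1:ℝ)/2) * (deriv (deriv v) y * (deriv v y)^2)) := by
    have hbound : Integrable (fun y =>
        1/2 * ((v y ^ ((1:ℝ)/2) * (deriv (deriv v) y)^2)
          + v y ^ (-(3:ℝ)/2) * (deriv v y)^4)) := (hint1.add hint2).const_mul _
    refine hbound.mono' ?_ ?_
    · exact ((hcont_v.rpow_const (fun x => Or.inl (hpos x).ne')).mul
        (hcont_ddv.mul (hcont_dv.pow 2))).aestronglyMeasurable
    · filter_upwards with y
      rw [Real.norm_eq_abs]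
      exact abs_bound (v y) (deriv v y) (deriv (deriv v) y) (hpos y)
  have hg'int : Integrable (fun x =>
      3 * (v x ^ (-(1:ℝ)/2) * (deriv (deriv v) x * (deriv v x)^2))
        - (1/2) * (v x ^ (-(3:ℝ)/2) * (deriv v x)^4)) :=
    (hf2int.const_mul 3).sub (hint2.const_mul (1/2))
  -- limits at infinity
  have hvtend : Tendsto v (cocompact ℝ) (nhds 0) := by
    simpa [iteratedDeriv_zero] using hdecay 0 0
  have hdvtend : Tendsto (deriv v) (cocompact ℝ) (nhds 0) := by
    simpa [iteratedDeriv_one] using hdecay 0 1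
  have hatTop_le : (atTop : Filter ℝ) ≤ cocompact ℝ := by
    rw [cocompact_eq_atBot_atTop]; exact le_sup_right
  have hatBot_le : (atBot : Filter ℝ) ≤ cocompact ℝ := by
    rw [cocompact_eq_atBot_atTop]; exact le_sup_left
  have hvolTop : ∀ s ∈ (atTop : Filter ℝ), volume s = ⊤ := by
    intro s hs
    obtain ⟨a, ha⟩ := mem_atTop_sets.mp hs
    have : volume (Ici a) ≤ volume s := measure_mono (fun x hx => ha x hx)
    rw [Real.volume_Ici] at this
    exact top_le_iff.mp this
  have hvolBot : ∀ s ∈ (atBot : Filter ℝ), volume s = ⊤ := by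
    intro s hs
    obtain ⟨a, ha⟩ := mem_atBot_sets.mp hs
    have : volume (Iic a) ≤ volume s := measure_mono (fun x hx => ha x hx)
    rw [Real.volume_Iic] at this
    exact top_le_iff.mp this
  have htop := tendsto_limUnder_of_hasDerivAt_of_integrableOn_Ioi (a := 0)
    (fun x _ => hg x) hg'int.integrableOn
  have hLtop : limUnder atTop (fun y => v y ^ (-(1:ℝ)/2) * (deriv v y)^3) = 0 :=
    lim_zero_aux v hpos hint2 (hvtend.mono_left hatTop_le) (hdvtend.mono_left hatTop_le)
      hvolTop htop
  rw [hLtop] at htop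
  have hbot := tendsto_limUnder_of_hasDerivAt_of_integrableOn_Iic (a := 0)
    (fun x _ => hg x) hg'int.integrableOn
  have hLbot : limUnder atBot (fun y => v y ^ (-(1:ℝ)/2) * (deriv v y)^3) = 0 :=
    lim_zero_aux v hpos hint2 (hvtend.mono_left hatBot_le) (hdvtend.mono_left hatBot_le)
      hvolBot hbot
  rw [hLbot] at hbot
  have hintg' : (∫ x : ℝ,
      (3 * (v x ^ (-(1:ℝ)/2) * (deriv (deriv v) x * (deriv v x)^2))
        - (1/2) * (v x ^ (-(3:ℝ)/2) * (deriv v x)^4))) = 0 := by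
    have := integral_of_hasDerivAt_of_tendsto hg hg'int hbot htop
    simpa using this
  have hA : (∫ x : ℝ, v x ^ (-(1:ℝ)/2) * (deriv (deriv v) x * (deriv v x)^2))
      = (1/6) * ∫ y : ℝ, v y ^ (-(3:ℝ)/2) * (deriv v y)^4 := by
    rw [integral_sub (hf2int.const_mul 3) (hint2.const_mul (1/2)),
      integral_const_mul _ _, integral_const_mul _ _] at hintg'
    linarith
  -- pointwise identity for the integrand
  have hpoint : ∀ y : ℝ, v y ^ ((3:ℝ)/2) * (deriv (deriv w) y)^2
      = (1/4) * ((v y ^ ((1:ℝ)/2) * (deriv (deriv v) y)^2)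
          - (v y ^ (-(1:ℝ)/2) * (deriv (deriv v) y * (deriv v y)^2))
          + (1/4) * (v y ^ (-(3:ℝ)/2) * (deriv v y)^4)) := by
    intro y
    have h := pointwise_key (v y) (deriv v y) (deriv (deriv v) y) (hpos y)
    rw [(hw2 y).deriv]
    linarith
  calc 4 * ∫ y : ℝ, v y ^ ((3:ℝ)/2) * (deriv (deriv w) y)^2
      = 4 * ∫ y : ℝ, (1/4) * ((v y ^ ((1:ℝ)/2) * (deriv (deriv v) y)^2)
          - (v y ^ (-(1:ℝ)/2) * (deriv (deriv v) y * (deriv v y)^2))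
          + (1/4) * (v y ^ (-(3:ℝ)/2) * (deriv v y)^4)) := by
        congr 1
        exact integral_congr_ae (Filter.Eventually.of_forall hpoint)
    _ = (∫ y : ℝ, v y ^ ((1 : ℝ) / 2) * (deriv (deriv v) y) ^ 2) +
        (1 / 12) * ∫ y : ℝ, v y ^ (-(3 : ℝ) / 2) * (deriv v y) ^ 4 := by
        rw [integral_const_mul _ _]
        have e1 : (∫ y : ℝ, ((v y ^ ((1:ℝ)/2) * (deriv (deriv v) y)^2)
              - (v y ^ (-(1:ℝ)/2) * (deriv (deriv v) y * (deriv v y)^2))))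
            = (∫ y : ℝ, v y ^ ((1:ℝ)/2) * (deriv (deriv v) y)^2)
              - ∫ y : ℝ, v y ^ (-(1:ℝ)/2) * (deriv (deriv v) y * (deriv v y)^2) :=
          integral_sub hint1 hf2int
        have e2 : (∫ y : ℝ, ((v y ^ ((1:ℝ)/2) * (deriv (deriv v) y)^2)
              - (v y ^ (-(1:ℝ)/2) * (deriv (deriv v) y * (deriv v y)^2))
              + (1/4) * (v y ^ (-(3:ℝ)/2) * (deriv v y)^4)))
            = (∫ y : ℝ, ((v y ^ ((1:ℝ)/2) * (deriv (deriv v) y)^2)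
              - (v y ^ (-(1:ℝ)/2) * (deriv (deriv v) y * (deriv v y)^2))))
              + ∫ y : ℝ, (1/4) * (v y ^ (-(3:ℝ)/2) * (deriv v y)^4) :=
          integral_add (hint1.sub hf2int) (hint2.const_mul _)
        have e3 : (∫ y : ℝ, (1/4) * (v y ^ (-(3:ℝ)/2) * (deriv v y)^4))
            = (1/4) * ∫ y : ℝ, v y ^ (-(3:ℝ)/2) * (deriv v y)^4 :=
          integral_const_mul _ _
        rw [e2, e1, e3, hA]
        ring
end
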